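/- arXiv:2512.10748 — 13 statements merged into one kernel-verified Lean document; each statement's English description precedes it below -/
import Mathlib

section
/- Every coalgebra for a well-founded functor is recursive: if G : C^I → C^I is well-founded (where I carries a well-founded relation <), then for every G-coalgebra (C,c) and every G-algebra (A,a) there exists a unique morphism h : C → A with h = a ∘ Gh ∘ c. -/
open CategoryTheory CategoryTheory.Limits

universe v u

/-- Every coalgebra for a well-founded functor is recursive.
`C^I` is the `I`-fold power of a category `C` with set-indexed coproducts, `I`
carries a well-founded relation `r`. Well-foundedness of `G : C^I ⥤ C^I` means
that for each `i`, the functor `pr_i ∘ G` factors through `pr_{<i}` up to natural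
isomorphism. Then for every `G`-coalgebra `(X, c)` and every `G`-algebra `(A, a)`
there exists a unique morphism `h : X ⟶ A` with `h = a ∘ Gh ∘ c`. -/
theorem stmt_0 {C : Type u} [Category.{v} C] [HasCoproducts.{0} C]
    {I : Type} (r : I → I → Prop) (hwf : WellFounded r)
    (G : (I → C) ⥤ (I → C))
    (hG : ∀ i : I, ∃ Gi : ({j : I // r j i} → C) ⥤ C,
      Nonempty (G ⋙ Pi.eval (fun _ : I => C) i ≅
        Functor.pi' (fun j : {j : I // r j i} => Pi.eval (fun _ : I => C) j.1) ⋙ Gi))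
    (X : I → C) (c : X ⟶ G.obj X) (A : I → C) (a : G.obj A ⟶ A) :
    ∃! h : X ⟶ A, h = c ≫ G.map h ≫ a := by
  choose Gi hη using hG
  have η : ∀ i, G ⋙ Pi.eval (fun _ : I => C) i ≅
      Functor.pi' (fun j : {j : I // r j i} => Pi.eval (fun _ : I => C) j.1) ⋙ Gi i :=
    fun i => (hη i).some
  -- the one-step operator: the `i`-th component only depends on components at `j` with `r j i`
  let Φ : ∀ i : I, (∀ j : {j : I // r j i}, X j.1 ⟶ A j.1) → (X i ⟶ A i) :=
    fun i k => c i ≫ (η i).hom.app X ≫ (Gi i).map k ≫ (η i).inv.app A ≫ a i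
  -- key: for any h, the i-th component of c ≫ G.map h ≫ a is Φ i applied to restriction of h
  have key : ∀ (h : X ⟶ A) (i : I),
      (c ≫ G.map h ≫ a) i = Φ i (fun j => h j.1) := by
    intro h i
    have nat := (η i).hom.naturality h
    have hGmh : (G.map h) i = (η i).hom.app X ≫ (Gi i).map (fun j => h j.1) ≫
        (η i).inv.app A := by
      have : (G.map h) i ≫ (η i).hom.app A =
          (η i).hom.app X ≫ (Gi i).map (fun j => h j.1) := nat
      refine (cancel_mono ((η i).hom.app A)).1 ?_
      exact this.trans (((Category.assoc ((η i).hom.app X) _ _).trans (whisker_eq ((η i).hom.app X)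
        ((Category.assoc _ ((η i).inv.app A) ((η i).hom.app A)).trans
        ((whisker_eq _ (Iso.inv_hom_id_app (η i) A)).trans (Category.comp_id _))))).symm)
    show c i ≫ (G.map h) i ≫ a i = _
    rw [hGmh]
    simp only [Φ]
    exact whisker_eq _ ((Category.assoc _ _ _).trans (whisker_eq _ (Category.assoc _ _ _)))
  -- define h by well-founded recursion
  let h : ∀ i : I, X i ⟶ A i :=
    hwf.fix (fun i ih => Φ i (fun j => ih j.1 j.2))
  have hfix : ∀ i, h i = Φ i (fun j => h j.1) := by
    intro i
    exact hwf.fix_eq _ i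
  refine ⟨h, ?_, ?_⟩
  · funext i
    rw [key h i, hfix i]
  · intro h' hh'
    funext i
    induction i using hwf.induction with
    | _ i ih =>
      have : h' i = Φ i (fun j => h' j.1) := by
        conv_lhs => rw [hh']
        exact key h' i
      rw [this, hfix i]
      congr 1
      funext j
      exact ih j.1 j.2
end

section
/- Every coalgebra for a well-founded functor is well-founded: if G : C^I → C^I is well-founded, then every G-coalgebra (C,c) has no proper cartesian subcoalgebras, i.e. for every cartesian subcoalgebra m : (S,s) ↣ (C,c) the monomorphism m is an isomorphism. -/
open CategoryTheory CategoryTheory.Limits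

universe v u

section Aux

variable {C : Type u} [Category.{v} C]

/-- In a pi category (over a constant family), an existing pullback is a pullback
componentwise. -/
lemma eval_isPullback {I : Type} {P X Y Z : I → C}
    {fst : P ⟶ X} {snd : P ⟶ Y} {f : X ⟶ Z} {g : Y ⟶ Z}
    (h : IsPullback fst snd f g) (i : I) :
    IsPullback (fst i) (snd i) (f i) (g i) := by
  classical
  have comm : fst i ≫ f i = snd i ≫ g i := congrFun h.w i
  apply IsPullback.of_isLimit (c := PullbackCone.mk (fst i) (snd i) comm)
  let W' : PullbackCone (f i) (g i) → (I → C) := fun t j => if h : j = i then t.pt else P j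
  let fst' : ∀ t, W' t ⟶ X := fun t j =>
    if h : j = i then eqToHom (dif_pos h) ≫ t.fst ≫ eqToHom (congrArg X h.symm)
    else eqToHom (dif_neg h) ≫ fst j
  let snd' : ∀ t, W' t ⟶ Y := fun t j =>
    if h : j = i then eqToHom (dif_pos h) ≫ t.snd ≫ eqToHom (congrArg Y h.symm)
    else eqToHom (dif_neg h) ≫ snd j
  have w : ∀ t, fst' t ≫ f = snd' t ≫ g := by
    intro t; funext j
    show fst' t j ≫ f j = snd' t j ≫ g j
    by_cases hj : j = i
    · have h1 : fst' t j = eqToHom (dif_pos hj) ≫ t.fst ≫ eqToHom (congrArg X hj.symm) :=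
        dif_pos hj
      have h2 : snd' t j = eqToHom (dif_pos hj) ≫ t.snd ≫ eqToHom (congrArg Y hj.symm) :=
        dif_pos hj
      rw [h1, h2]
      subst hj
      simp [t.condition]
    · have h1 : fst' t j = eqToHom (dif_neg hj) ≫ fst j := dif_neg hj
      have h2 : snd' t j = eqToHom (dif_neg hj) ≫ snd j := dif_neg hj
      have hw : fst j ≫ f j = snd j ≫ g j := congrFun h.w j
      rw [h1, h2, Category.assoc, Category.assoc, hw]
  refine PullbackCone.IsLimit.mk comm
    (fun t => eqToHom (show W' t i = t.pt from dif_pos rfl).symm ≫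
      (h.lift (fst' t) (snd' t) (w t)) i) ?_ ?_ ?_
  · intro t
    have hl : (h.lift (fst' t) (snd' t) (w t)) i ≫ fst i = fst' t i :=
      congrFun (h.lift_fst (fst' t) (snd' t) (w t)) i
    have hfi : fst' t i = eqToHom (show W' t i = t.pt from dif_pos rfl) ≫ t.fst ≫
        eqToHom (congrArg X (rfl : i = i).symm) := dif_pos rfl
    show (eqToHom (show W' t i = t.pt from dif_pos rfl).symm ≫
      (h.lift (fst' t) (snd' t) (w t)) i) ≫ fst i = t.fst
    rw [Category.assoc, hl, hfi]
    simp
  · intro t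
    have hl : (h.lift (fst' t) (snd' t) (w t)) i ≫ snd i = snd' t i :=
      congrFun (h.lift_snd (fst' t) (snd' t) (w t)) i
    have hsi : snd' t i = eqToHom (show W' t i = t.pt from dif_pos rfl) ≫ t.snd ≫
        eqToHom (congrArg Y (rfl : i = i).symm) := dif_pos rfl
    show (eqToHom (show W' t i = t.pt from dif_pos rfl).symm ≫
      (h.lift (fst' t) (snd' t) (w t)) i) ≫ snd i = t.snd
    rw [Category.assoc, hl, hsi]
    simp
  · intro t u hu1 hu2
    simp only [PullbackCone.mk_fst] at hu1
    simp only [PullbackCone.mk_snd] at hu2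
    let u' : W' t ⟶ P := fun j =>
      if h : j = i then eqToHom (dif_pos h) ≫ u ≫ eqToHom (congrArg P h.symm)
      else eqToHom (dif_neg h) ≫ 𝟙 (P j)
    have hu' : u' = h.lift (fst' t) (snd' t) (w t) := by
      apply h.hom_ext
      · rw [h.lift_fst]
        funext j
        show u' j ≫ fst j = fst' t j
        by_cases hj : j = i
        · have h1 : u' j = eqToHom (dif_pos hj) ≫ u ≫ eqToHom (congrArg P hj.symm) :=
            dif_pos hj
          have h2 : fst' t j = eqToHom (dif_pos hj) ≫ t.fst ≫ eqToHom (congrArg X hj.symm) :=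
            dif_pos hj
          rw [h1, h2]
          subst hj
          simp [hu1]
        · have h1 : u' j = eqToHom (dif_neg hj) ≫ 𝟙 (P j) := dif_neg hj
          have h2 : fst' t j = eqToHom (dif_neg hj) ≫ fst j := dif_neg hj
          rw [h1, h2]
          simp
      · rw [h.lift_snd]
        funext j
        show u' j ≫ snd j = snd' t j
        by_cases hj : j = i
        · have h1 : u' j = eqToHom (dif_pos hj) ≫ u ≫ eqToHom (congrArg P hj.symm) :=
            dif_pos hj
          have h2 : snd' t j = eqToHom (dif_pos hj) ≫ t.snd ≫ eqToHom (congrArg Y hj.symm) :=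
            dif_pos hj
          rw [h1, h2]
          subst hj
          simp [hu2]
        · have h1 : u' j = eqToHom (dif_neg hj) ≫ 𝟙 (P j) := dif_neg hj
          have h2 : snd' t j = eqToHom (dif_neg hj) ≫ snd j := dif_neg hj
          rw [h1, h2]
          simp
    have hcomp : u' i = (h.lift (fst' t) (snd' t) (w t)) i := congrFun hu' i
    have hui : u' i = eqToHom (show W' t i = t.pt from dif_pos rfl) ≫ u ≫
        eqToHom (congrArg P (rfl : i = i).symm) := dif_pos rfl
    rw [hui] at hcomp
    simp only [eqToHom_refl, Category.comp_id] at hcomp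
    show u = eqToHom (show W' t i = t.pt from dif_pos rfl).symm ≫
      (h.lift (fst' t) (snd' t) (w t)) i
    rw [← hcomp]
    simp

/-- Pullback (fst) along an iso is an iso. -/
lemma isIso_fst_of_isPullback {P X Y Z : C} {fst : P ⟶ X} {snd : P ⟶ Y} {f : X ⟶ Z}
    {g : Y ⟶ Z} (h : IsPullback fst snd f g) [IsIso g] : IsIso fst := by
  have w : (𝟙 X) ≫ f = (f ≫ inv g) ≫ g := by simp
  refine ⟨h.lift (𝟙 X) (f ≫ inv g) w, ?_, h.lift_fst _ _ _⟩
  apply h.hom_ext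
  · simp [h.lift_fst]
  · simp only [Category.assoc, h.lift_snd, Category.id_comp]
    rw [reassoc_of% h.w]
    simp

/-- Componentwise isos in a pi category give an iso. -/
lemma isIso_pi {I : Type} {X Y : I → C} (f : X ⟶ Y) (h : ∀ i, IsIso (f i)) : IsIso f := by
  refine ⟨fun i => inv (f i), ?_, ?_⟩ <;> funext i <;> simp [Pi.comp_apply]

end Aux

/-- Every coalgebra for a well-founded functor is well-founded:
if `G : C^I ⥤ C^I` is well-founded (for each `i`, `pr_i ∘ G` factors through
`pr_{<i}` up to natural isomorphism), then every `G`-coalgebra `(X, c)` has no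
proper cartesian subcoalgebra: for every subcoalgebra `m : (S,s) ↣ (X,c)`
(a mono `m` with `m ≫ c = s ≫ G.map m`) whose square is a pullback, `m` is an
isomorphism. -/
theorem stmt_1 {C : Type u} [Category.{v} C] [HasCoproducts.{0} C]
    {I : Type} (r : I → I → Prop) (hwf : WellFounded r)
    (G : (I → C) ⥤ (I → C))
    (hG : ∀ i : I, ∃ Gi : ({j : I // r j i} → C) ⥤ C,
      Nonempty (G ⋙ Pi.eval (fun _ : I => C) i ≅
        Functor.pi' (fun j : {j : I // r j i} => Pi.eval (fun _ : I => C) j.1) ⋙ Gi))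
    (X : I → C) (c : X ⟶ G.obj X)
    (S : I → C) (s : S ⟶ G.obj S) (m : S ⟶ X) [Mono m]
    (hpb : IsPullback m s c (G.map m)) :
    IsIso m := by
  have key : ∀ i, IsIso (m i) := by
    intro i
    induction i using WellFounded.induction hwf with
    | _ i ih =>
      obtain ⟨Gi, ⟨e⟩⟩ := hG i
      -- the restriction of m to predecessors of i is an iso
      have hres : IsIso ((Functor.pi'
          (fun j : {j : I // r j i} => Pi.eval (fun _ : I => C) j.1)).map m) := by
        apply isIso_pi
        intro j
        exact ih j.1 j.2
      -- hence (G.map m) i is an iso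
      have hGm : IsIso (G.map m i) := by
        have hn := e.hom.naturality m
        have : G.map m i = e.hom.app S ≫ (Functor.pi'
            (fun j : {j : I // r j i} => Pi.eval (fun _ : I => C) j.1) ⋙ Gi).map m ≫
            e.inv.app X := by
          rw [← Category.assoc, ← hn]
          simp only [Functor.comp_map, Category.assoc, Iso.hom_inv_id_app]
          exact (Category.comp_id _).symm
        rw [this]
        have : IsIso ((Functor.pi'
            (fun j : {j : I // r j i} => Pi.eval (fun _ : I => C) j.1) ⋙ Gi).map m) := by
          dsimp only [Functor.comp_map]
          infer_instance
        exact IsIso.comp_isIso' (e.app S).isIso_hom (IsIso.comp_isIso' this (e.app X).isIso_inv)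
      exact isIso_fst_of_isPullback (eval_isPullback hpb i)
  exact isIso_pi m key
end

section
/- The well-founded coreflection of any functor is well-founded: for any functor G : C^I → C^I, the functor G↓ defined by (G↓ X)_i = (G T_{<i} X)_i is a well-founded functor. -/
open CategoryTheory CategoryTheory.Limits

attribute [local instance] Classical.propDecidable

universe v u

variable {C : Type u} [Category.{v} C] {I : Type}

/-- The `j`-th component functor of the truncation functor `T_{<i}`:
the evaluation `pr_j` if `j < i`, and constant at the initial object otherwise. -/
noncomputable def truncComp [HasInitial C] (r : I → I → Prop) (i j : I) :
    (I → C) ⥤ C :=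
  if r j i then Pi.eval (fun _ : I => C) j else (Functor.const (I → C)).obj (⊥_ C)

/-- The truncation functor `T_{<i} : C^I ⥤ C^I`: `(T_{<i} X)_j = X_j` if `j < i`
and the initial object `0` otherwise. -/
noncomputable def trunc [HasInitial C] (r : I → I → Prop) (i : I) :
    (I → C) ⥤ (I → C) :=
  Functor.pi' (truncComp r i)

/-- The counit of the truncation comonad, as a natural transformation on the
`j`-th component: the identity (`eqToHom`) if `j < i`, and the unique morphism
out of the initial object otherwise. -/
noncomputable def truncCounitComp [HasInitial C] (r : I → I → Prop) (i j : I) :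
    truncComp (C := C) r i j ⟶ Pi.eval (fun _ : I => C) j :=
  if h : r j i then eqToHom (if_pos h)
  else eqToHom (if_neg h) ≫
    { app := fun X => initial.to (X j)
      naturality := by intros; simp <;> apply initial.hom_ext }

/-- The counit `t_{i,X} : T_{<i} X ⟶ X`: the identity in components `j < i` and
the unique morphism `0 ⟶ X_j` otherwise. -/
noncomputable def truncCounit [HasInitial C] (r : I → I → Prop) (i : I)
    (X : I → C) : (trunc r i (C := C)).obj X ⟶ X := fun j =>
  (truncCounitComp r i j).app X

lemma truncCounit_naturality [HasInitial C] (r : I → I → Prop) (i : I)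
    {X Y : I → C} (f : X ⟶ Y) :
    (trunc r i).map f ≫ truncCounit r i Y = truncCounit r i X ≫ f := by
  funext j
  exact (truncCounitComp r i j).naturality f

/-- The well-founded coreflection `G↓` of a functor `G : C^I ⥤ C^I`:
`(G↓ X)_i = (G (T_{<i} X))_i`. -/
noncomputable def coreflection [HasInitial C] (r : I → I → Prop)
    (G : (I → C) ⥤ (I → C)) : (I → C) ⥤ (I → C) where
  obj X := fun i => (G.obj ((trunc r i).obj X)) i
  map {X Y} f := fun i => (G.map ((trunc r i).map f)) i
  map_id X := by funext i; simp
  map_comp {X Y Z} f g := by funext i; simp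

/-- The natural transformation `ε_G : G↓ ⟶ G` with components
`(ε_{G,X})_i = (G t_{i,X})_i`. -/
noncomputable def epsilonNat [HasInitial C] (r : I → I → Prop)
    (G : (I → C) ⥤ (I → C)) : coreflection r G ⟶ G where
  app X := fun i => (G.map (truncCounit r i X)) i
  naturality {X Y} f := by
    funext i
    have : (G.map ((trunc r i).map f) ≫ G.map (truncCounit r i Y)) i
        = (G.map (truncCounit r i X) ≫ G.map f) i := by
      rw [← G.map_comp, ← G.map_comp, truncCounit_naturality]
    exact this

lemma pi_eqToHom_app {X Y : I → C} (h : X = Y) (j : I) :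
    (eqToHom h : X ⟶ Y) j = eqToHom (congrFun h j) := by
  subst h; rfl

/-- Extension by the initial object: from `{j // r j i} → C` to `I → C`. -/
noncomputable def extendF [HasInitial C] (r : I → I → Prop) (i : I) :
    ({j : I // r j i} → C) ⥤ (I → C) where
  obj Y := fun j => if h : r j i then Y ⟨j, h⟩ else ⊥_ C
  map {Y Z} f := fun j =>
    if h : r j i then eqToHom (by simp [h]) ≫ f ⟨j, h⟩ ≫ eqToHom (by simp [h])
    else eqToHom (by simp [h])
  map_id Y := by
    funext j
    by_cases h : r j i <;> simp [h]
  map_comp {X Y Z} f g := by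
    funext j
    by_cases h : r j i <;> simp [h, Pi.comp_apply]

lemma eqToHom_aux1 {A B M D E N : C} (p : A = B) (p1 : A = M) (p2 : M = B) (g : B ⟶ D)
    (q : D = E) (q1 : D = N) (q2 : N = E) :
    eqToHom p ≫ g ≫ eqToHom q = eqToHom p1 ≫ eqToHom p2 ≫ (g ≫ eqToHom q1) ≫ eqToHom q2 := by
  subst p1 p2 q1 q2; simp

lemma eqToHom_aux2 {A B M N : C} (p : A = B) (p1 : A = M) (p2 : M = N) (p3 : N = B) :
    eqToHom p = eqToHom p1 ≫ eqToHom p2 ≫ eqToHom p3 := by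
  subst p1 p2 p3; simp

lemma trunc_eq_restrict_extend [HasInitial C] (r : I → I → Prop) (i : I) :
    trunc (C := C) r i =
      Functor.pi' (fun j : {j : I // r j i} => Pi.eval (fun _ : I => C) j.1) ⋙
        extendF r i := by
  have hobj : ∀ X, (trunc (C := C) r i).obj X =
      (Functor.pi' (fun j : {j : I // r j i} => Pi.eval (fun _ : I => C) j.1) ⋙
        extendF r i).obj X := by
    intro X
    funext j
    by_cases h : r j i <;>
      simp [trunc, truncComp, extendF, h, Functor.pi']
  refine CategoryTheory.Functor.ext hobj (fun X Y f => ?_)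
  funext j
  rw [Pi.comp_apply, Pi.comp_apply, pi_eqToHom_app, pi_eqToHom_app]
  by_cases h : r j i
  · have hF : truncComp (C := C) r i j = Pi.eval (fun _ : I => C) j := if_pos h
    have hc := Functor.congr_hom hF f
    show (truncComp (C := C) r i j).map f = _
    rw [hc]
    simp [extendF, h, Functor.pi']
    exact eqToHom_aux1 _ _ _ _ _ _ _
  · have hF : truncComp (C := C) r i j
        = (Functor.const (I → C)).obj (⊥_ C) := if_neg h
    have hc := Functor.congr_hom hF f
    show (truncComp (C := C) r i j).map f = _
    rw [hc]
    simp [extendF, h, Functor.pi']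
    exact eqToHom_aux2 _ _ _ _

/-- The well-founded coreflection of any functor is well-founded:
for any functor `G : C^I ⥤ C^I` (with `I` carrying a well-founded relation `r`
and `C` having set-indexed coproducts, hence an initial object), the functor
`G↓` with `(G↓ X)_i = (G (T_{<i} X))_i` is a well-founded functor: for every
`i`, `pr_i ∘ G↓` factors through `pr_{<i}` up to natural isomorphism. -/
theorem stmt_2 {C : Type u} [Category.{v} C] [HasCoproducts.{0} C] [HasInitial C]
    {I : Type} (r : I → I → Prop) (hwf : WellFounded r)
    (G : (I → C) ⥤ (I → C)) :
    ∀ i : I, ∃ Gi : ({j : I // r j i} → C) ⥤ C,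
      Nonempty (coreflection r G ⋙ Pi.eval (fun _ : I => C) i ≅
        Functor.pi' (fun j : {j : I // r j i} => Pi.eval (fun _ : I => C) j.1) ⋙ Gi) := by
  intro i
  refine ⟨extendF r i ⋙ G ⋙ Pi.eval (fun _ : I => C) i, ⟨?_⟩⟩
  have h1 : coreflection r G ⋙ Pi.eval (fun _ : I => C) i
      = trunc r i ⋙ G ⋙ Pi.eval (fun _ : I => C) i := rfl
  calc coreflection r G ⋙ Pi.eval (fun _ : I => C) i
      ≅ trunc r i ⋙ G ⋙ Pi.eval (fun _ : I => C) i := eqToIso h1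
    _ ≅ (Functor.pi' (fun j : {j : I // r j i} => Pi.eval (fun _ : I => C) j.1) ⋙
          extendF r i) ⋙ G ⋙ Pi.eval (fun _ : I => C) i :=
        Functor.isoWhiskerRight (eqToIso (trunc_eq_restrict_extend r i)) _
    _ ≅ _ := Functor.associator _ _ _
end

section
/- Recursivity is preserved by natural transformations: given endofunctors F, G on a category C, a natural transformation α : G → F, and a recursive G-coalgebra c : C → GC, the F-coalgebra α_C ∘ c : C → FC is recursive. -/
open CategoryTheory

universe v u

/-- Recursivity of coalgebras is preserved by natural transformations. -/
theorem stmt_5 {C : Type u} [Category.{v} C] (F G : C ⥤ C) (α : G ⟶ F)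
    (X : C) (c : X ⟶ G.obj X)
    (hrec : ∀ (A : C) (a : G.obj A ⟶ A), ∃! h : X ⟶ A, h = c ≫ G.map h ≫ a)
    (A : C) (a : F.obj A ⟶ A) :
    ∃! h : X ⟶ A, h = (c ≫ α.app X) ≫ F.map h ≫ a := by
  -- by naturality, the equation for `a` is the equation for the `G`-algebra `α.app A ≫ a`
  simpa only [Category.assoc, ← α.naturality_assoc] using hrec A (α.app A ≫ a)
end

section
/- Determinization preserves recursive coalgebras: given an endofunctor F : C → C and an adjunction L ⊣ R : C → D (L : D → C), if c : C → RFLC is a recursive RFL-coalgebra then its adjoint transpose c♯ : LC → FLC is a recursive F-coalgebra. -/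
/-!
Transposition along `L ⊣ R` is a bijection `(L X ⟶ B) ≃ (X ⟶ R B)` which turns the recursion
equation of `c♯` for an `F`-algebra `b : F B ⟶ B` into the recursion equation of `c` for the
`RFL`-algebra `R (F ε_B ≫ b) : R F L R B ⟶ R B`; unique solutions therefore correspond.
-/

open CategoryTheory

universe v₁ v₂ u₁ u₂

namespace CategoryTheory.Adjunction

variable {C : Type u₁} [Category.{v₁} C] {D : Type u₂} [Category.{v₂} D]
  {L : D ⥤ C} {R : C ⥤ D} (adj : L ⊣ R) (F : C ⥤ C)

lemma homEquiv_transpose_comp {X : D} {B : C} (c : X ⟶ R.obj (F.obj (L.obj X)))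
    (b : F.obj B ⟶ B) (g : L.obj X ⟶ B) :
    adj.homEquiv X B ((L.map c ≫ adj.counit.app (F.obj (L.obj X))) ≫ F.map g ≫ b) =
      c ≫ R.map (F.map (L.map (adj.homEquiv X B g))) ≫
        R.map (F.map (adj.counit.app B) ≫ b) := by
  rw [← Equiv.eq_symm_apply, homEquiv_counit]
  simp only [Functor.map_comp, Category.assoc, counit_naturality, counit_naturality_assoc]
  rw [← F.map_comp_assoc, homEquiv_unit]
  simp

lemma transpose_isFixedPoint_iff {X : D} {B : C} (c : X ⟶ R.obj (F.obj (L.obj X)))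
    (b : F.obj B ⟶ B) (g : L.obj X ⟶ B) :
    g = (L.map c ≫ adj.counit.app (F.obj (L.obj X))) ≫ F.map g ≫ b ↔
      adj.homEquiv X B g = c ≫ R.map (F.map (L.map (adj.homEquiv X B g))) ≫
        R.map (F.map (adj.counit.app B) ≫ b) := by
  rw [← homEquiv_transpose_comp, (adj.homEquiv X B).apply_eq_iff_eq]

end CategoryTheory.Adjunction

/-- Determinization preserves recursive coalgebras: given an adjunction
`L ⊣ R` and an endofunctor `F` on `C`, if `c : X ⟶ R F L X` is a recursive
`R∘F∘L`-coalgebra, then its adjoint transpose `c♯ = ε_{FLX} ∘ L c : L X ⟶ F L X`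
is a recursive `F`-coalgebra. -/
theorem stmt_6 {C : Type u₁} [Category.{v₁} C] {D : Type u₂} [Category.{v₂} D]
    (F : C ⥤ C) (L : D ⥤ C) (R : C ⥤ D) (adj : L ⊣ R)
    (X : D) (c : X ⟶ R.obj (F.obj (L.obj X)))
    (hrec : ∀ (A : D) (a : R.obj (F.obj (L.obj A)) ⟶ A),
      ∃! h : X ⟶ A, h = c ≫ R.map (F.map (L.map h)) ≫ a)
    (B : C) (b : F.obj B ⟶ B) :
    ∃! h : L.obj X ⟶ B,
      h = (L.map c ≫ adj.counit.app (F.obj (L.obj X))) ≫ F.map h ≫ b :=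
  ((adj.homEquiv X B).existsUnique_congr (adj.transpose_isFixedPoint_iff F c b)).mpr
    (hrec (R.obj B) (R.map (F.map (adj.counit.app B) ≫ b)))
end

section
/- Every ranked coalgebra is recursive: if (c_i : C_i → F(∐_{j<i} C_j))_{i∈I} is a ranked family for an endofunctor F on a category C with set-indexed coproducts, then the induced F-coalgebra on C = ∐_{i∈I} C_i, with structure c = [F(in_{<i}) ∘ c_i]_{i∈I}, is recursive. -/
/-!
A morphism `h : ∐ C_i ⟶ A` is the same as a family `h_i : C_i ⟶ A`, and the equation
`h = a ∘ F h ∘ c` says precisely that `h_i = a ∘ F [h_j]_{j<i} ∘ c_i` for every `i`. Each `h_i`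
is thus determined by the `h_j` with `j < i`, so well-founded recursion on `<` produces exactly
one such family.
-/

open CategoryTheory CategoryTheory.Limits

universe v u

theorem WellFounded.eq_fix {α : Sort*} {r : α → α → Prop} (hwf : WellFounded r)
    {motive : α → Sort*} (step : ∀ x, (∀ y, r y x → motive y) → motive x)
    (g : ∀ x, motive x) (hg : ∀ x, g x = step x fun y _ => g y) (x : α) :
    g x = hwf.fix step x := by
  induction x using hwf.induction with
  | _ x ih =>
    rw [hg x, hwf.fix_eq]
    congr
    funext y hy
    exact ih y hy

namespace RankedFamily

variable {C : Type u} [Category.{v} C] [HasCoproducts.{0} C] {I : Type}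
  (r : I → I → Prop) (Cf : I → C)

/-- The paper's `in_{<i}`. -/
noncomputable def inBelow (i : I) : (∐ fun j : {j : I // r j i} => Cf j.1) ⟶ ∐ Cf :=
  Sigma.desc fun j => Sigma.ι Cf j.1

lemma inBelow_comp {X : C} (i : I) (h : ∐ Cf ⟶ X) :
    inBelow r Cf i ≫ h = Sigma.desc fun j : {j : I // r j i} => Sigma.ι Cf j.1 ≫ h := by
  ext j
  simp [inBelow]

variable (F : C ⥤ C) (cf : ∀ i : I, Cf i ⟶ F.obj (∐ fun j : {j : I // r j i} => Cf j.1))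

noncomputable def coalgebraStr : ∐ Cf ⟶ F.obj (∐ Cf) :=
  Sigma.desc fun i => cf i ≫ F.map (inBelow r Cf i)

variable {A : C} (a : F.obj A ⟶ A)

noncomputable def recStep (i : I) (g : ∀ j, r j i → (Cf j ⟶ A)) : Cf i ⟶ A :=
  cf i ≫ F.map (Sigma.desc fun j : {j : I // r j i} => g j.1 j.2) ≫ a

lemma ι_coalgebraStr_comp (h : ∐ Cf ⟶ A) (i : I) :
    Sigma.ι Cf i ≫ coalgebraStr r Cf F cf ≫ F.map h ≫ a =
      recStep r Cf F cf a i fun j _ => Sigma.ι Cf j ≫ h := by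
  simp only [coalgebraStr, recStep, Sigma.ι_desc_assoc, Category.assoc,
    ← F.map_comp_assoc, inBelow_comp]

lemma eq_coalgebraStr_comp_iff (h : ∐ Cf ⟶ A) :
    h = coalgebraStr r Cf F cf ≫ F.map h ≫ a ↔
      ∀ i, Sigma.ι Cf i ≫ h = recStep r Cf F cf a i fun j _ => Sigma.ι Cf j ≫ h := by
  refine ⟨fun hh i => ?_, fun hh => ?_⟩
  · conv_lhs => rw [hh]
    exact ι_coalgebraStr_comp r Cf F cf a h i
  · ext i
    rw [hh, ι_coalgebraStr_comp]

end RankedFamily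

open RankedFamily in
/-- Every ranked coalgebra is recursive. Given a ranked family
`(c_i : C_i ⟶ F(∐_{j<i} C_j))` for an endofunctor `F` on a category with
set-indexed coproducts (`I` with a well-founded relation `r`), the induced
`F`-coalgebra on `∐_i C_i` with structure `c = [F(in_{<i}) ∘ c_i]_i` is
recursive: for every `F`-algebra `(A, a)` there is a unique `h` with
`h = a ∘ F h ∘ c`. -/
theorem stmt_7 {C : Type u} [Category.{v} C] [HasCoproducts.{0} C]
    {I : Type} (r : I → I → Prop) (hwf : WellFounded r)
    (F : C ⥤ C) (Cf : I → C)
    (cf : ∀ i : I, Cf i ⟶ F.obj (∐ fun j : {j : I // r j i} => Cf j.1))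
    (A : C) (a : F.obj A ⟶ A) :
    ∃! h : (∐ Cf) ⟶ A,
      h = (Sigma.desc fun i =>
            cf i ≫ F.map (Sigma.desc fun j : {j : I // r j i} => Sigma.ι Cf j.1))
          ≫ F.map h ≫ a := by
  refine ⟨Sigma.desc (hwf.fix (recStep r Cf F cf a)), ?_, fun h hh => ?_⟩
  · refine (eq_coalgebraStr_comp_iff r Cf F cf a _).2 fun i => ?_
    simp only [Sigma.ι_desc]
    exact hwf.fix_eq _ i
  · ext i
    rw [Sigma.ι_desc]
    exact hwf.eq_fix _ _ ((eq_coalgebraStr_comp_iff r Cf F cf a h).1 hh) i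
end

section
/- Every ranked coalgebra is well-founded: the F-coalgebra induced by a ranked family has no proper cartesian subcoalgebras. -/
/-!
Induction along the well-founded relation shows that every coproduct injection
`Cᵢ ⟶ ∐ C` factors through `m`: once all `Cⱼ` with `j < i` factor, so does the
inclusion `∐_{j<i} Cⱼ ⟶ ∐ C`, and then the pullback property of the cartesian square
lifts `Cᵢ` along `m`, since `Cᵢ ⟶ ∐ C ⟶ F(∐ C)` is `cᵢ` followed by `F` of that inclusion.
The injections assemble into a section of `m`, and a mono with a section is an iso.
-/

open CategoryTheory CategoryTheory.Limits

universe v u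

namespace CategoryTheory.Limits

variable {C : Type u} [Category.{v} C]

theorem isIso_of_forall_ι_factorsThrough {β : Type*} {f : β → C} [HasCoproduct f] {S : C}
    (m : S ⟶ ∐ f) [Mono m] (h : ∀ b, ∃ l : f b ⟶ S, l ≫ m = Sigma.ι f b) : IsIso m := by
  choose l hl using h
  have : IsSplitEpi m := ⟨⟨Sigma.desc l, by ext b; simp [hl]⟩⟩
  exact isIso_of_mono_of_isSplitEpi m

end CategoryTheory.Limits

section RankedCoalgebra

variable {C : Type u} [Category.{v} C] [HasCoproducts.{0} C] {I : Type}
  (r : I → I → Prop) (F : C ⥤ C) (Cf : I → C)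
  (cf : ∀ i : I, Cf i ⟶ F.obj (∐ fun j : {j : I // r j i} => Cf j.1))

noncomputable abbrev rankedInclusion (i : I) : (∐ fun j : {j : I // r j i} => Cf j.1) ⟶ ∐ Cf :=
  Sigma.desc fun j => Sigma.ι Cf j.1

noncomputable abbrev rankedCoalgebraStr : ∐ Cf ⟶ F.obj (∐ Cf) :=
  Sigma.desc fun i => cf i ≫ F.map (rankedInclusion r Cf i)

variable {r F Cf cf}

theorem ι_factorsThrough_of_isPullback (hwf : WellFounded r) {S : C} {s : S ⟶ F.obj S}
    {m : S ⟶ ∐ Cf} (hpb : IsPullback m s (rankedCoalgebraStr r F Cf cf) (F.map m)) (i : I) :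
    ∃ l : Cf i ⟶ S, l ≫ m = Sigma.ι Cf i := by
  induction i using hwf.induction with
  | _ i ih =>
    choose l hl using ih
    let k : (∐ fun j : {j : I // r j i} => Cf j.1) ⟶ S := Sigma.desc fun j => l j.1 j.2
    have hk : k ≫ m = rankedInclusion r Cf i := by
      ext j
      simp [k, hl]
    have hsq : Sigma.ι Cf i ≫ rankedCoalgebraStr r F Cf cf = (cf i ≫ F.map k) ≫ F.map m := by
      rw [Sigma.ι_desc, Category.assoc, ← F.map_comp, hk]
    exact ⟨hpb.lift _ _ hsq, hpb.lift_fst _ _ _⟩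

end RankedCoalgebra

/-- Every ranked coalgebra is well-founded: the `F`-coalgebra on
`∐_i C_i` induced by a ranked family `(c_i : C_i ⟶ F(∐_{j<i} C_j))` has no
proper cartesian subcoalgebra: any mono `m : (S,s) ↣ (∐ C, c)` of coalgebras
whose square is a pullback is an isomorphism. -/
theorem stmt_8 {C : Type u} [Category.{v} C] [HasCoproducts.{0} C]
    {I : Type} (r : I → I → Prop) (hwf : WellFounded r)
    (F : C ⥤ C) (Cf : I → C)
    (cf : ∀ i : I, Cf i ⟶ F.obj (∐ fun j : {j : I // r j i} => Cf j.1))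
    (S : C)
    (s : S ⟶ F.obj S) (m : S ⟶ ∐ Cf) [Mono m]
    (hpb : IsPullback m s
      (Sigma.desc fun i =>
        cf i ≫ F.map (Sigma.desc fun j : {j : I // r j i} => Sigma.ι Cf j.1))
      (F.map m)) :
    IsIso m :=
  isIso_of_forall_ι_factorsThrough m (ι_factorsThrough_of_isPullback (cf := cf) hwf hpb)
end

section
/- For a Set-functor F preserving wide intersections, an F-coalgebra (C,c) admits a ranking function r : C → I into some well-founded (I,<) if and only if (C,c) is well-founded, if and only if (C,c) is ranked. -/
open CategoryTheory

/-- `t ∈ F(M)` for a subset `M ⊆ X`: `t` lies in the image of `F` applied to the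
inclusion `M ↪ X`. (This renders the convention that `F` preserves inclusions.) -/
def memF (F : Type ⥤ Type) {X : Type} (M : Set X) (t : F.obj X) : Prop :=
  t ∈ Set.range (F.map (TypeCat.ofHom ((↑) : M → X)))

/-- `F` preserves wide intersections: for any non-empty family of subsets,
membership in `F` of the intersection is equivalent to membership in `F` of each
member (the nontrivial direction being the one stated). -/
def PreservesWideIntersections (F : Type ⥤ Type) : Prop :=
  ∀ (X : Type) (K : Type) (_ : Nonempty K) (M : K → Set X) (t : F.obj X),
    (∀ k, memF F (M k) t) → memF F (⋂ k, M k) t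

/-- The support of `t ∈ F X`: the least subset `M ⊆ X` with `t ∈ F M`. -/
def suppF (F : Type ⥤ Type) {X : Type} (t : F.obj X) : Set X :=
  ⋂₀ {M : Set X | memF F M t}

lemma memF_mono (F : Type ⥤ Type) {X : Type} {M N : Set X} (h : M ⊆ N) {t : F.obj X}
    (ht : memF F M t) : memF F N t := by
  obtain ⟨s, rfl⟩ := ht
  refine ⟨F.map (TypeCat.ofHom (Set.inclusion h)) s, ?_⟩
  rw [← FunctorToTypes.map_comp_apply]
  rfl

lemma memF_range (F : Type ⥤ Type) {X Y : Type} (f : Y → X) (t : F.obj Y) :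
    memF F (Set.range f) (F.map (TypeCat.ofHom f) t) := by
  refine ⟨F.map (TypeCat.ofHom (Set.rangeFactorization f)) t, ?_⟩
  rw [← FunctorToTypes.map_comp_apply]
  rfl

lemma memF_univ (F : Type ⥤ Type) {X : Type} (t : F.obj X) :
    memF F Set.univ t := by
  refine ⟨F.map (TypeCat.ofHom (fun x => ⟨x, Set.mem_univ x⟩)) t, ?_⟩
  rw [← FunctorToTypes.map_comp_apply]
  change F.map (𝟙 X) t = t
  rw [FunctorToTypes.map_id_apply]

lemma memF_supp (F : Type ⥤ Type) (hF : PreservesWideIntersections F) {X : Type}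
    (t : F.obj X) : memF F (suppF F t) t := by
  have h := hF X {M : Set X | memF F M t} ⟨⟨Set.univ, memF_univ F t⟩⟩
    (fun k => k.1) t (fun k => k.2)
  have e : (⋂ k : {M : Set X | memF F M t}, (k : Set X)) = suppF F t :=
    (Set.sInter_eq_iInter).symm
  rwa [e] at h

/-- For a `Set`-functor `F` preserving wide intersections and an
`F`-coalgebra `(C, c)`, the following are equivalent:
(a) `(C,c)` admits a ranking function `r : C → I` into some well-founded `(I,<)`,
    i.e. `c x ∈ F({y | r y < r x})` for all `x`;
(b) `(C,c)` is well-founded, i.e. its canonical graph (edge `x → y` iff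
    `y ∈ supp (c x)`) has no infinite paths — the relation is well-founded;
(c) `(C,c)` is ranked, i.e. (up to isomorphism of coalgebras) induced by a ranked
    family `(c_i : C_i → F(∐_{j<i} C_j))` over some well-founded `(I,<)`. -/
theorem stmt_9 (F : Type ⥤ Type) (hF : PreservesWideIntersections F)
    (C : Type) (c : C → F.obj C) :
    ((∃ (I : Type) (lt : I → I → Prop), WellFounded lt ∧
        ∃ rk : C → I, ∀ x : C, memF F {y : C | lt (rk y) (rk x)} (c x))
      ↔ WellFounded (fun y x : C => y ∈ suppF F (c x))) ∧
    (WellFounded (fun y x : C => y ∈ suppF F (c x))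
      ↔ (∃ (I : Type) (lt : I → I → Prop), WellFounded lt ∧
          ∃ (Ci : I → Type)
            (ci : ∀ i : I, Ci i → F.obj (Σ j : {j : I // lt j i}, Ci j.1))
            (e : (Σ i : I, Ci i) ≃ C),
            ∀ z : Σ i : I, Ci i,
              c (e z) =
                F.map (TypeCat.ofHom (fun p : Σ j : {j : I // lt j z.1}, Ci j.1 => e ⟨p.1.1, p.2⟩))
                  (ci z.1 z.2))) := by
  constructor
  · constructor
    · rintro ⟨I, lt, wf, rk, h⟩
      refine Subrelation.wf (r := InvImage lt rk) ?_ (InvImage.wf rk wf)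
      intro y x hyx
      exact Set.sInter_subset_of_mem (S := {M : Set C | memF F M (c x)}) (h x) hyx
    · intro wf
      exact ⟨C, _, wf, id, fun x => memF_supp F hF (c x)⟩
  · constructor
    · intro wf
      have key : ∀ i : C,
          memF F {j : C | Relation.TransGen (fun y x : C => y ∈ suppF F (c x)) j i} (c i) := by
        intro i
        refine memF_mono F ?_ (memF_supp F hF (c i))
        intro y hy
        exact Relation.TransGen.single hy
      refine ⟨C, Relation.TransGen (fun y x : C => y ∈ suppF F (c x)), wf.transGen,
        fun _ => PUnit,
        fun i _ => F.map
          (TypeCat.ofHom (fun j : {j : C | Relation.TransGen (fun y x : C => y ∈ suppF F (c x)) j i} =>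
            (⟨⟨j.1, j.2⟩, PUnit.unit⟩ :
              Σ j : {j : C // Relation.TransGen (fun y x : C => y ∈ suppF F (c x)) j i},
                PUnit))) (key i).choose,
        ⟨fun z => z.1, fun x => ⟨x, PUnit.unit⟩, fun z => rfl, fun x => rfl⟩, ?_⟩
      rintro ⟨i, ⟨⟩⟩
      show c i = _
      rw [← FunctorToTypes.map_comp_apply]
      exact ((key i).choose_spec).symm
    · rintro ⟨I, lt, wf, Ci, ci, e, h⟩
      refine Subrelation.wf (r := InvImage lt (fun x => (e.symm x).1)) ?_
        (InvImage.wf _ wf)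
      intro y x hyx
      have hx : memF F (Set.range (fun p : Σ j : {j : I // lt j (e.symm x).1}, Ci j.1 =>
          e ⟨p.1.1, p.2⟩)) (c x) := by
        have hh := h (e.symm x)
        rw [e.apply_symm_apply] at hh
        rw [hh]
        exact memF_range F _ _
      have hsub : suppF F (c x) ⊆ {y : C | lt ((e.symm y).1) ((e.symm x).1)} := by
        refine Set.sInter_subset_of_mem (S := {M : Set C | memF F M (c x)}) (memF_mono F ?_ hx)
        rintro _ ⟨p, rfl⟩
        show lt ((e.symm (e ⟨p.1.1, p.2⟩)).1) _
        rw [e.symm_apply_apply]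
        exact p.1.2
      exact hsub hyx
end

section
/- A coalgebra for the powerset functor (i.e. a directed graph c : C → P(C)) is well-founded in the categorical sense (has no proper cartesian subcoalgebra) if and only if the graph has no infinite path x_0 → x_1 → x_2 → ⋯. -/
/-!
Both conditions are equivalent to well-foundedness of the converse edge relation `y ∈ c x`.
For this relation, well-founded induction says exactly that a cartesian subcoalgebra contains every
point; conversely, the accessible points form a cartesian subcoalgebra, since a point is accessible
iff all its successors are. Well-foundedness is equivalent to the absence of infinite descending
chains, which here are the infinite paths.
-/

open Set

namespace PowersetCoalgebra

variable {C : Type*} (c : C → Set C)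

def IsCartesian (S : Set C) : Prop :=
  ∀ x, x ∈ S ↔ c x ⊆ S

variable {c}

theorem IsCartesian.eq_univ_of_wellFounded (hwf : WellFounded fun y x => y ∈ c x) {S : Set C}
    (hS : IsCartesian c S) : S = univ :=
  eq_univ_of_forall fun x => hwf.induction x fun x ih => (hS x).2 ih

variable (c)

theorem isCartesian_setOf_acc : IsCartesian c {x | Acc (fun y x => y ∈ c x) x} :=
  fun x => ⟨fun hx _ hy => hx.inv hy, fun h => Acc.intro x h⟩

theorem wellFounded_iff_forall_isCartesian_eq_univ :
    (WellFounded fun y x => y ∈ c x) ↔ ∀ S, IsCartesian c S → S = univ :=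
  ⟨fun hwf _ hS => hS.eq_univ_of_wellFounded hwf, fun h =>
    ⟨fun x => eq_univ_iff_forall.1 (h _ (isCartesian_setOf_acc c)) x⟩⟩

end PowersetCoalgebra

open PowersetCoalgebra in
/-- A coalgebra for the powerset functor, i.e. a directed graph
`c : C → P(C)` (with edge `x → y` iff `y ∈ c x`), is well-founded in the
categorical sense — every cartesian subcoalgebra, i.e. every `S ⊆ C` with
`x ∈ S ⟺ c x ⊆ S` for all `x`, equals `C` — if and only if the graph has no
infinite path `x₀ → x₁ → x₂ → ⋯`. -/
theorem stmt_10 {C : Type*} (c : C → Set C) :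
    (∀ S : Set C, (∀ x, x ∈ S ↔ c x ⊆ S) → S = Set.univ) ↔
      ¬ ∃ x : ℕ → C, ∀ n, x (n + 1) ∈ c (x n) := by
  refine (wellFounded_iff_forall_isCartesian_eq_univ c).symm.trans ?_
  rw [wellFounded_iff_isEmpty_descending_chain, isEmpty_subtype, not_exists]
end

section
/- Coalgebraic disjunctive well-foundedness: let F : Set → Set preserve wide intersections, (C,c) an F-coalgebra, and r_k : C → I_k (k in a finite set K) functions into sets I_k with well-founded relations <_k. If for every x ∈ C and every y reachable from x by a non-empty path in the canonical graph of (C,c) there exists k ∈ K with r_k(y) <_k r_k(x), then (C,c) is well-founded. -/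
open Classical in
private lemma ramsey_step {K : Type} [Finite K] (color : ℕ → ℕ → K)
    (S : Set ℕ) (hS : S.Infinite) :
    ∃ T : Set ℕ, T.Infinite ∧ T ⊆ S ∧ (∀ m ∈ T, sInf S < m) ∧
      ∃ k, ∀ m ∈ T, color (sInf S) m = k := by
  set a := sInf S with ha
  have h1 : (S ∩ Set.Ioi a).Infinite := by
    have : S ∩ Set.Ioi a = S \ Set.Iic a := by
      ext m; simp [Set.mem_diff, not_le]
    rw [this]; exact hS.diff (Set.finite_Iic a)
  haveI : Infinite ↥(S ∩ Set.Ioi a) := h1.to_subtype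
  obtain ⟨k, hk⟩ := Finite.exists_infinite_fiber
    (fun m : ↥(S ∩ Set.Ioi a) => color a m)
  have hfib : ((fun m : ↥(S ∩ Set.Ioi a) => color a m) ⁻¹' {k}).Infinite :=
    Set.infinite_coe_iff.mp hk
  refine ⟨{m | m ∈ S ∧ a < m ∧ color a m = k}, ?_, fun m hm => hm.1,
    fun m hm => hm.2.1, k, fun m hm => hm.2.2⟩
  have himg := hfib.image (Set.injOn_of_injective Subtype.val_injective)
  have : Subtype.val '' ((fun m : ↥(S ∩ Set.Ioi a) => color a m) ⁻¹' {k})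
      = {m | m ∈ S ∧ a < m ∧ color a m = k} := by
    ext m
    constructor
    · rintro ⟨⟨m, hmS, hma⟩, hc, rfl⟩
      exact ⟨hmS, hma, hc⟩
    · rintro ⟨hmS, hma, hc⟩
      exact ⟨⟨m, hmS, hma⟩, hc, rfl⟩
  rwa [this] at himg

open Classical in
private noncomputable def ramseyChain {K : Type} [Finite K] (color : ℕ → ℕ → K) :
    ℕ → {S : Set ℕ // S.Infinite}
  | 0 => ⟨Set.univ, Set.infinite_univ⟩
  | (n+1) =>
    ⟨(ramsey_step color (ramseyChain color n).1 (ramseyChain color n).2).choose,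
     (ramsey_step color (ramseyChain color n).1 (ramseyChain color n).2).choose_spec.1⟩

/-- Infinite Ramsey theorem for pairs with finitely many colors. -/
private lemma ramsey_pairs {K : Type} [Finite K] [Nonempty K] (color : ℕ → ℕ → K) :
    ∃ (k : K) (g : ℕ → ℕ), StrictMono g ∧ ∀ i j, i < j → color (g i) (g j) = k := by
  classical
  set Ch := ramseyChain color with hCh
  have spec : ∀ n, (Ch (n+1)).1.Infinite ∧ (Ch (n+1)).1 ⊆ (Ch n).1 ∧
      (∀ m ∈ (Ch (n+1)).1, sInf (Ch n).1 < m) ∧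
      ∃ k, ∀ m ∈ (Ch (n+1)).1, color (sInf (Ch n).1) m = k := by
    intro n
    exact (ramsey_step color (Ch n).1 (Ch n).2).choose_spec
  set a : ℕ → ℕ := fun n => sInf (Ch n).1 with haa
  have hmem : ∀ n, a n ∈ (Ch n).1 := fun n =>
    Nat.sInf_mem ((Ch n).2.nonempty)
  have hsub : ∀ i j, i ≤ j → (Ch j).1 ⊆ (Ch i).1 := by
    intro i j hij
    induction j with
    | zero => simp_all
    | succ j ih =>
      rcases Nat.lt_or_ge i (j+1) with h | h
      · exact ((spec j).2.1).trans (ih (Nat.lt_succ_iff.mp h))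
      · have : i = j + 1 := le_antisymm hij h
        subst this; exact subset_rfl
  choose kc hkc using fun n => (spec n).2.2.2
  have key : ∀ i j, i < j → color (a i) (a j) = kc i := by
    intro i j hij
    exact hkc i (a j) (hsub (i+1) j hij (hmem j))
  have hamono : StrictMono a := by
    apply strictMono_nat_of_lt_succ
    intro n
    exact (spec n).2.2.1 (a (n+1)) (hmem (n+1))
  obtain ⟨k, hk⟩ := Finite.exists_infinite_fiber kc
  have hinf : (setOf (fun n => kc n = k)).Infinite := by
    have := Set.infinite_coe_iff.mp hk
    convert this using 1
    rfl
  refine ⟨k, fun n => a (Nat.nth (fun n => kc n = k) n), ?_, ?_⟩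
  · exact hamono.comp (Nat.nth_strictMono hinf)
  · intro i j hij
    rw [key _ _ ((Nat.nth_strictMono hinf) hij)]
    exact Nat.nth_mem_of_infinite hinf i

private lemma exists_descending_of_not_wf {α : Type} {r : α → α → Prop}
    (h : ¬ WellFounded r) : ∃ f : ℕ → α, ∀ n, r (f (n+1)) (f n) := by
  classical
  have hx : ∃ x, ¬ Acc r x := by
    by_contra h'
    push_neg at h'
    exact h ⟨fun x => h' x⟩
  have step : ∀ x : α, ¬ Acc r x → ∃ y, r y x ∧ ¬ Acc r y := by
    intro x hx'
    by_contra h'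
    push_neg at h'
    exact hx' (Acc.intro x fun y hy => h' y hy)
  obtain ⟨x0, hx0⟩ := hx
  choose g hg1 hg2 using step
  let G : {x : α // ¬ Acc r x} → {x : α // ¬ Acc r x} :=
    fun p => ⟨g p.1 p.2, hg2 p.1 p.2⟩
  refine ⟨fun n => (G^[n] ⟨x0, hx0⟩).1, fun n => ?_⟩
  show r (G^[n+1] ⟨x0, hx0⟩).1 (G^[n] ⟨x0, hx0⟩).1
  rw [Function.iterate_succ_apply']
  exact hg1 _ _

private lemma no_descending_of_wf {α : Type*} {r : α → α → Prop} (h : WellFounded r)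
    (f : ℕ → α) (hf : ∀ n, r (f (n+1)) (f n)) : False := by
  suffices H : ∀ x, Acc r x → ∀ n, f n = x → False from H (f 0) (h.apply _) 0 rfl
  intro x hx
  induction hx with
  | intro y hy ih =>
    intro n hn
    exact ih (f (n+1)) (hn ▸ hf n) (n+1) rfl


open CategoryTheory

/-- Coalgebraic disjunctive well-foundedness: let `F` preserve wide
intersections, `(C, c)` an `F`-coalgebra, `K` finite, and `r_k : C → I_k` functions
into well-founded relations `(I_k, <_k)`. If for every `x` and every `y` reachable
from `x` by a non-empty path in the canonical graph of `(C,c)` there is `k` with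
`r_k y <_k r_k x`, then `(C, c)` is well-founded (its canonical graph has no
infinite paths). -/
theorem stmt_11 (F : Type ⥤ Type) (hF : PreservesWideIntersections F)
    (C : Type) (c : C → F.obj C)
    (K : Type) [Finite K] (I : K → Type) (lt : ∀ k, I k → I k → Prop)
    (hlt : ∀ k, WellFounded (lt k)) (rk : ∀ k, C → I k)
    (hrank : ∀ x y : C,
      Relation.TransGen (fun a b : C => b ∈ suppF F (c a)) x y →
      ∃ k, lt k (rk k y) (rk k x)) :
    WellFounded (fun y x : C => y ∈ suppF F (c x)) := by
  classical
  set E : C → C → Prop := fun a b => b ∈ suppF F (c a) with hE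
  by_contra hwf
  obtain ⟨f, hf⟩ := exists_descending_of_not_wf hwf
  have hstep : ∀ n, E (f n) (f (n+1)) := fun n => hf n
  have htrans : ∀ i j, i < j → Relation.TransGen E (f i) (f j) := by
    intro i j hij
    induction j with
    | zero => omega
    | succ j ih =>
      rcases Nat.lt_or_ge i j with h | h
      · exact (ih h).tail (hstep j)
      · have hij' : i = j := by omega
        subst hij'
        exact Relation.TransGen.single (hstep i)
  choose pick hpick using hrank
  haveI hK : Nonempty K := ⟨pick (f 0) (f 1) (htrans 0 1 Nat.one_pos)⟩
  set color : ℕ → ℕ → K := fun i j =>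
    if h : i < j then pick (f i) (f j) (htrans i j h) else Classical.arbitrary K
    with hcolor
  obtain ⟨k, g, hg, hcol⟩ := ramsey_pairs color
  have hdesc : ∀ n, lt k (rk k (f (g (n+1)))) (rk k (f (g n))) := by
    intro n
    have hgl : g n < g (n+1) := hg (Nat.lt_succ_self n)
    have h1 : pick (f (g n)) (f (g (n+1))) (htrans _ _ hgl) = k := by
      have h0 := hcol n (n+1) (Nat.lt_succ_self n)
      simp only [hcolor] at h0
      rwa [dif_pos hgl] at h0
    have h2 := hpick (f (g n)) (f (g (n+1))) (htrans _ _ hgl)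
    rwa [h1] at h2
  exact no_descending_of_wf (hlt k) (fun n => rk k (f (g n))) hdesc
end

section
/- The Quicksort coalgebra is recursive: for a set Z with a linear order, the coalgebra c : Z* → 1 + Z* × Z × Z* given by c(ε) = inl and c(p·w) = inr(w_{≤p}, p, w_{>p}) is a recursive coalgebra for the functor FX = 1 + X × Z × X; i.e., for every map a : 1 + A × Z × A → A there exists a unique h : Z* → A with h(ε) = a(inl) and h(p·w) = a(inr(h(w_{≤p}), p, h(w_{>p}))). -/
private def qsFold {Z : Type*} [LinearOrder Z] {A : Type*}
    (a : Unit ⊕ (A × Z × A) → A) : List Z → A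
  | [] => a (Sum.inl ())
  | p :: w => a (Sum.inr (qsFold a (w.filter (fun x => x ≤ p)), p,
                          qsFold a (w.filter (fun x => p < x))))
termination_by l => l.length
decreasing_by
  all_goals simp only [List.length_cons]
  · exact Nat.lt_succ_of_le (by rw [List.length_unattach]; exact (List.length_filter_le _ _).trans_eq List.length_attach)
  · exact Nat.lt_succ_of_le (by rw [List.length_unattach]; exact (List.length_filter_le _ _).trans_eq List.length_attach)

/-- The Quicksort coalgebra `c : Z* → 1 + Z* × Z × Z*`,
`c(ε) = inl`, `c(p·w) = inr(w_{≤p}, p, w_{>p})`, is a recursive coalgebra for the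
functor `F X = 1 + X × Z × X`: for every algebra `a : 1 + A × Z × A → A` there is
a unique `h : Z* → A` with `h(ε) = a(inl)` and
`h(p·w) = a(inr(h(w_{≤p}), p, h(w_{>p})))`. -/
theorem stmt_12 {Z : Type*} [LinearOrder Z] (A : Type*) (a : Unit ⊕ (A × Z × A) → A) :
    ∃! h : List Z → A,
      h [] = a (Sum.inl ()) ∧
      ∀ (p : Z) (w : List Z),
        h (p :: w) = a (Sum.inr (h (w.filter (fun x => x ≤ p)), p,
                                 h (w.filter (fun x => p < x)))) := by
  refine ⟨qsFold a, ⟨by rw [qsFold], fun p w => by rw [qsFold]⟩, ?_⟩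
  rintro g ⟨g0, gs⟩
  have key : ∀ n (l : List Z), l.length ≤ n → g l = qsFold a l := by
    intro n
    induction n with
    | zero => intro l hl; simp at hl; subst hl; rw [g0, qsFold]
    | succ n ih =>
      intro l hl
      match l with
      | [] => rw [g0, qsFold]
      | p :: w =>
        simp only [List.length_cons, Nat.succ_le_succ_iff] at hl
        rw [gs, qsFold, ih _ (le_trans (List.length_filter_le _ w) hl),
          ih _ (le_trans (List.length_filter_le _ w) hl)]
  exact funext fun l => key l.length l le_rfl
end

section
/- Intrinsic correctness of Quicksort: the unique coalgebra-to-algebra morphism sort : Z* → Z* determined by the Quicksort coalgebra c and the combining algebra a(inl) = ε, a(inr(u,p,w)) = u·p·w satisfies: for every list w, sort(w) is sorted and is a permutation of w (has the same multiset of elements). -/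
/-- Intrinsic correctness of Quicksort: the (unique) map `sort`
determined by the Quicksort coalgebra and the combining algebra, i.e. satisfying
`sort ε = ε` and `sort (p·w) = sort (w_{≤p}) · p · sort (w_{>p})`, produces for
every list `w` a sorted list with the same multiset of elements as `w`. -/
theorem stmt_13 {Z : Type*} [LinearOrder Z] (sort : List Z → List Z)
    (h_nil : sort [] = [])
    (h_cons : ∀ (p : Z) (w : List Z),
      sort (p :: w) =
        sort (w.filter (fun x => x ≤ p)) ++ p :: sort (w.filter (fun x => p < x)))
    (w : List Z) :
    List.Pairwise (· ≤ ·) (sort w) ∧ (↑(sort w) : Multiset Z) = (↑w : Multiset Z) := by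
  suffices h : ∀ n (w : List Z), w.length ≤ n →
      List.Pairwise (· ≤ ·) (sort w) ∧ (↑(sort w) : Multiset Z) = (↑w : Multiset Z) from
    h w.length w le_rfl
  intro n
  induction n with
  | zero =>
    intro w hw
    rw [List.length_eq_zero_iff.mp (Nat.le_zero.mp hw), h_nil]
    simp
  | succ n ih =>
    intro w hw
    match w with
    | [] => rw [h_nil]; simp
    | p :: w =>
      have hlen : w.length ≤ n := Nat.succ_le_succ_iff.mp hw
      have h1 := ih (w.filter (fun x => x ≤ p))
        (le_trans (List.length_filter_le _ _) hlen)
      have h2 := ih (w.filter (fun x => p < x))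
        (le_trans (List.length_filter_le _ _) hlen)
      have hperm : List.Perm ((w.filter (fun x => x ≤ p)) ++ (w.filter (fun x => p < x))) w := by
        have h := List.filter_append_perm (fun x => decide (x ≤ p)) w
        rwa [show (fun x => !decide (x ≤ p)) = (fun x => decide (p < x)) by
          funext x; simp [← decide_not, decide_eq_decide, not_lt]] at h
      have p1 : List.Perm (sort (w.filter (fun x => x ≤ p))) (w.filter (fun x => x ≤ p)) :=
        Multiset.coe_eq_coe.mp h1.2
      have p2 : List.Perm (sort (w.filter (fun x => p < x))) (w.filter (fun x => p < x)) :=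
        Multiset.coe_eq_coe.mp h2.2
      rw [h_cons]
      constructor
      · refine List.pairwise_append.mpr ⟨h1.1, List.pairwise_cons.mpr ⟨?_, h2.1⟩, ?_⟩
        · intro y hy
          have := List.of_mem_filter (p2.mem_iff.mp hy)
          exact le_of_lt (by simpa using this)
        · intro x hx y hy
          have hxp : x ≤ p := by
            have := List.of_mem_filter (p1.mem_iff.mp hx)
            simpa using this
          rcases List.mem_cons.mp hy with rfl | hy'
          · exact hxp
          · have hpy : p < y := by
              have := List.of_mem_filter (p2.mem_iff.mp hy')
              simpa using this
            exact le_of_lt (lt_of_le_of_lt hxp hpy)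
      · rw [Multiset.coe_eq_coe]
        exact ((p1.append (p2.cons p)).trans List.perm_middle).trans (hperm.cons p)
end

section
/- Correctness of the CYK algebra step: fix a context-free grammar in Chomsky normal form with non-terminals V and terminals Σ. For w ∈ Σ⁺, let A_u = {P ∈ V | P ⇒⁺ u} for each u ∈ Σ⁺, and let p be a function assigning to each decomposition w = u·v (u,v ∈ Σ⁺) the pair (A_u, A_v). Define a_w(p) = {P | ∃σ ∈ Σ, w = σ and P → σ is a rule} ∪ {P | ∃ rule P → QT and decomposition w = u·v with Q ∈ A_u and T ∈ A_v}. Then a_w(p) = {P ∈ V | P ⇒⁺ w}. -/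
/-- Derivability `P ⇒⁺ w` of a non-empty word `w` from a non-terminal `P` in a
context-free grammar in Chomsky normal form, given by its binary rules
`bin P Q T` (for `P → QT`) and unary rules `un P σ` (for `P → σ`). -/
inductive Derives {V S : Type*} (bin : V → V → V → Prop) (un : V → S → Prop) :
    V → List S → Prop
  | unary {P : V} {σ : S} : un P σ → Derives bin un P [σ]
  | binary {P Q T : V} {u v : List S} :
      bin P Q T → u ≠ [] → v ≠ [] →
      Derives bin un Q u → Derives bin un T v → Derives bin un P (u ++ v)

theorem stmt_17_general {V S : Type*} (bin : V → V → V → Prop) (un : V → S → Prop)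
    (w : List S) (P : V) :
    ((∃ σ : S, w = [σ] ∧ un P σ) ∨
      (∃ (Q T : V) (u v : List S), bin P Q T ∧ u ≠ [] ∧ v ≠ [] ∧ w = u ++ v ∧
        Derives bin un Q u ∧ Derives bin un T v))
    ↔ Derives bin un P w := by
  constructor
  · rintro (⟨σ, rfl, hun⟩ | ⟨Q, T, u, v, hbin, hu, hv, rfl, hQ, hT⟩)
    exacts [.unary hun, .binary hbin hu hv hQ hT]
  · rintro (hun | ⟨hbin, hu, hv, hQ, hT⟩)
    exacts [.inl ⟨_, rfl, hun⟩, .inr ⟨_, _, _, _, hbin, hu, hv, rfl, hQ, hT⟩]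

/-- Correctness of the CYK algebra step: for a non-empty word `w`,
the set
`a_w(p) = {P | ∃σ, w = σ, P → σ} ∪ {P | ∃ rule P → QT, ∃ w = u·v with Q ⇒⁺ u, T ⇒⁺ v}`
(where `p` assigns to each decomposition `w = u·v` the pair `(A_u, A_v)` of sets of
non-terminals deriving `u` resp. `v`) equals `{P ∈ V | P ⇒⁺ w}`. -/
theorem stmt_17 {V S : Type*} (bin : V → V → V → Prop) (un : V → S → Prop)
    (w : List S) (hw : w ≠ []) (P : V) :
    ((∃ σ : S, w = [σ] ∧ un P σ) ∨
      (∃ (Q T : V) (u v : List S), bin P Q T ∧ u ≠ [] ∧ v ≠ [] ∧ w = u ++ v ∧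
        Derives bin un Q u ∧ Derives bin un T v))
    ↔ Derives bin un P w :=
  stmt_17_general bin un w P
end
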